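/- Weighted Poincaré inequality with axial weights for vector fields (Lemma 2(c)): For every real δ ≠ 0, every ρ₀ > 0, and every continuously differentiable ℝ²-valued function Ȳ on ℝ³ with compact support and vanishing on K_{ρ₀}, 2 δ⁻² ∫_{Ω_{ρ₀}} ∇Ȳᵗ ∇Ȳ ρ^{−3δ} dΣ ≥ 3 ∫_{Ω_{ρ₀}} Ȳᵗ Ȳ ρ^{−3δ−2} dΣ. -/

import Mathlib

/- Formalization preamble for:
   "Small deformations of extreme five-dimensional vacuum black hole initial data"
   Work on ℝ³ (Euclidean); cylindrical radius ρ(x)=√(x₀²+x₁²), axis coordinate z = x₂.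
   The measure dΣ = ρ dρ dz dφ is Lebesgue measure on ℝ³. -/

open MeasureTheory Real
open scoped RealInnerProductSpace BigOperators

noncomputable section

namespace BHMass

/-- ℝ³ as a Euclidean space. -/
abbrev E3 : Type := EuclideanSpace ℝ (Fin 3)

/-- Cylindrical radius ρ. -/
def cylRho (x : E3) : ℝ := Real.sqrt ((x 0) ^ 2 + (x 1) ^ 2)

/-- The solid cylinder K_{ρ₀} = {ρ ≤ ρ₀}. -/
def Kcyl (ρ₀ : ℝ) : Set E3 := {x | cylRho x ≤ ρ₀}

/-- Ω_{ρ₀} = ℝ³ ∖ K_{ρ₀}. -/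
def Omg (ρ₀ : ℝ) : Set E3 := {x | ρ₀ < cylRho x}

/-- σ = √(r² + 1). -/
def sigmaW (x : E3) : ℝ := Real.sqrt (‖x‖ ^ 2 + 1)

/-- Flat gradient on ℝ³. -/
def grad (f : E3 → ℝ) : E3 → E3 := gradient f

/-- Flat Laplacian Δ₃. -/
def lap (f : E3 → ℝ) (x : E3) : ℝ :=
  ∑ i : Fin 3, iteratedFDeriv ℝ 2 f x ![EuclideanSpace.single i 1, EuclideanSpace.single i 1]

/-- Flat divergence ∇· of a vector field. -/
def divg (V : E3 → E3) (x : E3) : ℝ :=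
  ∑ i : Fin 3, fderiv ℝ (fun y => V y i) x (EuclideanSpace.single i 1)

/-- A scalar field is axisymmetric if it depends only on (ρ, z). -/
def Axisym (f : E3 → ℝ) : Prop :=
  ∀ x y : E3, cylRho x = cylRho y → x 2 = y 2 → f x = f y

abbrev Mat2 : Type := Matrix (Fin 2) (Fin 2) ℝ

/-- ∇Yᵗ A ∇Z = Σᵢⱼ Aᵢⱼ ⟪∇Yᵢ, ∇Zⱼ⟫ (gradients contracted with the flat metric). -/
def quadG (A : Mat2) (Y Z : E3 → Fin 2 → ℝ) (x : E3) : ℝ :=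
  ∑ i, ∑ j, A i j * ⟪grad (fun y => Y y i) x, grad (fun y => Z y j) x⟫

/-- aᵗ A b for 2-vectors. -/
def vecQuad (A : Mat2) (a b : Fin 2 → ℝ) : ℝ := ∑ i, ∑ j, a i * A i j * b j

/-- det(∇L) = ∇L₁₁·∇L₂₂ − ∇L₁₂·∇L₁₂. -/
def gradDet (L : E3 → Mat2) (x : E3) : ℝ :=
  ⟪grad (fun y => L y 0 0) x, grad (fun y => L y 1 1) x⟫ -
    ⟪grad (fun y => L y 0 1) x, grad (fun y => L y 0 1) x⟫

/-- A data (or perturbation) triple u = (v, λ', Y). -/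
structure Data where
  v : E3 → ℝ
  L : E3 → Mat2
  Y : E3 → Fin 2 → ℝ

/-- The zero triple. -/
def zeroData : Data := ⟨fun _ => 0, fun _ => 0, fun _ => 0⟩

/-- All components smooth. -/
def SmoothData (u : Data) : Prop :=
  ContDiff ℝ (⊤ : ℕ∞) u.v ∧ (∀ i j, ContDiff ℝ (⊤ : ℕ∞) fun x => u.L x i j) ∧
    ∀ i, ContDiff ℝ (⊤ : ℕ∞) fun x => u.Y x i

/-- All components axisymmetric. -/
def AxisymData (u : Data) : Prop :=
  Axisym u.v ∧ (∀ i j, Axisym fun x => u.L x i j) ∧ ∀ i, Axisym fun x => u.Y x i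

/-- λ = e^{2v} λ'. -/
def lamD (u : Data) (x : E3) : Mat2 := Real.exp (2 * u.v x) • u.L x

/-- X = det λ = e^{4v} ρ². -/
def XD (u : Data) (x : E3) : ℝ := Real.exp (4 * u.v x) * cylRho x ^ 2

/-- u + t·φ. -/
def addS (u φ : Data) (t : ℝ) : Data :=
  ⟨fun x => u.v x + t * φ.v x, fun x => u.L x + t • φ.L x, fun x => u.Y x + t • φ.Y x⟩

/-- The expression σ^{-β} |f| + σ^{-β+1} |∇f| appearing in the C¹_β norm,
    for given pointwise magnitudes m = |f| and dm = |∇f|. -/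
def c1Expr (β : ℝ) (m dm : E3 → ℝ) (x : E3) : ℝ :=
  sigmaW x ^ (-β) * m x + sigmaW x ^ (-β + 1) * dm x

/-- The weighted C¹_β norm over Ω. -/
def c1Norm (β : ℝ) (Ω : Set E3) (m dm : E3 → ℝ) : ℝ := ⨆ x ∈ Ω, c1Expr β m dm x

/-- Finiteness of the C¹_β norm over Ω. -/
def c1Fin (β : ℝ) (Ω : Set E3) (m dm : E3 → ℝ) : Prop := BddAbove (c1Expr β m dm '' Ω)

/-- |M|² = Tr(MᵗM). -/
def matAbsSq (M : Mat2) : ℝ := ∑ i, ∑ j, (M i j) ^ 2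

/-- |∇L|² (sum over entries of |∇L_{ij}|²). -/
def gradMatAbsSq (L : E3 → Mat2) (x : E3) : ℝ := ∑ i, ∑ j, ‖grad (fun y => L y i j) x‖ ^ 2

/-- The Banach norm ‖φ‖_B = ‖v̄‖_{C¹_β(ℝ³)} + ‖λ̄'‖_{C¹_β(Ω_{ρ₀})} + ‖Ȳ‖_{C¹_β(Ω_{ρ₀})},
    where |Ȳ| = (Ȳᵗ λ'₀⁻¹ Ȳ)^{1/2}, |∇Ȳ| = (∇Ȳᵗ λ'₀⁻¹ ∇Ȳ)^{1/2}. -/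
def BNorm (β ρ₀ : ℝ) (L0 : E3 → Mat2) (φ : Data) : ℝ :=
  c1Norm β Set.univ (fun x => |φ.v x|) (fun x => ‖grad φ.v x‖)
  + c1Norm β (Omg ρ₀) (fun x => Real.sqrt (matAbsSq (φ.L x)))
      (fun x => Real.sqrt (gradMatAbsSq φ.L x))
  + c1Norm β (Omg ρ₀) (fun x => Real.sqrt (vecQuad (L0 x)⁻¹ (φ.Y x) (φ.Y x)))
      (fun x => Real.sqrt (quadG (L0 x)⁻¹ φ.Y φ.Y x))

/-- Finiteness of ‖φ‖_B. -/
def FiniteB (β ρ₀ : ℝ) (L0 : E3 → Mat2) (φ : Data) : Prop :=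
  c1Fin β Set.univ (fun x => |φ.v x|) (fun x => ‖grad φ.v x‖) ∧
  c1Fin β (Omg ρ₀) (fun x => Real.sqrt (matAbsSq (φ.L x)))
      (fun x => Real.sqrt (gradMatAbsSq φ.L x)) ∧
  c1Fin β (Omg ρ₀) (fun x => Real.sqrt (vecQuad (L0 x)⁻¹ (φ.Y x) (φ.Y x)))
      (fun x => Real.sqrt (quadG (L0 x)⁻¹ φ.Y φ.Y x))

/-- Perturbation triple: smooth, axisymmetric, λ̄' and Ȳ vanishing on K_{ρ₀},
    λ̄' symmetric with det λ̄' = 0 and Tr(adj(λ'₀) λ̄') = 0. -/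
def IsPert (ρ₀ : ℝ) (L0 : E3 → Mat2) (φ : Data) : Prop :=
  SmoothData φ ∧ AxisymData φ ∧
  (∀ x, cylRho x ≤ ρ₀ → φ.L x = 0 ∧ φ.Y x = 0) ∧
  (∀ x, (φ.L x).IsSymm) ∧
  (∀ x, (φ.L x).det = 0) ∧
  (∀ x, ((L0 x).adjugate * φ.L x).trace = 0)

/-- Membership in the Banach space B. -/
def InB (β ρ₀ : ℝ) (L0 : E3 → Mat2) (φ : Data) : Prop :=
  IsPert ρ₀ L0 φ ∧ FiniteB β ρ₀ L0 φ

/-- The Hilbert norm squared ‖φ‖²_H = ‖v̄‖²_{H₁} + ‖λ̄'‖²_{H₂} + ‖Ȳ‖²_{H₃}. -/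
def HNormSq (ρ₀ : ℝ) (L0 : E3 → Mat2) (φ : Data) : ℝ :=
  (∫ x : E3, (‖grad φ.v x‖ ^ 2 / ‖x‖ ^ 2 + (φ.v x) ^ 2 / ‖x‖ ^ 4)) +
  (∫ x in Omg ρ₀, (gradMatAbsSq φ.L x / cylRho x ^ 2 + matAbsSq (φ.L x) / cylRho x ^ 4)) +
  (∫ x in Omg ρ₀, (quadG (L0 x)⁻¹ φ.Y φ.Y x / cylRho x ^ 2
      + vecQuad (L0 x)⁻¹ (φ.Y x) (φ.Y x) / cylRho x ^ 4))

/-- Bulk integrand of the mass functional. -/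
def massIntegrand (u : Data) (x : E3) : ℝ :=
  -gradDet u.L x / (2 * cylRho x ^ 2)
  + Real.exp (-(6 : ℝ) * u.v x) * quadG (u.L x)⁻¹ u.Y u.Y x / (2 * cylRho x ^ 2)
  + 6 * ‖grad u.v x‖ ^ 2

/-- The mass functional 𝓜, with rod boundary term R. -/
def massFun (R : (E3 → Mat2) → ℝ) (u : Data) : ℝ :=
  (1 / 8) * (∫ x : E3, massIntegrand u x) + R u.L

/-- The rod term depends only on λ' on the cylinder K_{ρ₀} (a neighbourhood of the
    axis), hence is unchanged by perturbations vanishing on K_{ρ₀}. -/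
def RodLocal (ρ₀ : ℝ) (R : (E3 → Mat2) → ℝ) : Prop :=
  ∀ L L' : E3 → Mat2, (∀ x, cylRho x ≤ ρ₀ → L x = L' x) → R L = R L'

/-- First stationary (Euler–Lagrange) equation: 4Δ₃v + X⁻¹ ∇Yᵗ λ⁻¹ ∇Y = 0. -/
def EL1 (u : Data) (x : E3) : Prop :=
  4 * lap u.v x + quadG (lamD u x)⁻¹ u.Y u.Y x / XD u x = 0

/-- Second stationary equation: ∇·(ρ⁻² ∇λ') + X⁻² e^{2v} ∇Y ∇Yᵗ = 0. -/
def EL2 (u : Data) (x : E3) : Prop :=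
  ∀ i j, divg (fun y => (cylRho y ^ 2)⁻¹ • grad (fun z => u.L z i j) y) x
    + Real.exp (2 * u.v x) / XD u x ^ 2 *
        ⟪grad (fun y => u.Y y i) x, grad (fun y => u.Y y j) x⟫ = 0

/-- Third stationary equation: ∇·(X⁻¹ λ⁻¹ ∇Y) = 0. -/
def EL3 (u : Data) (x : E3) : Prop :=
  ∀ i, divg (fun y => (XD u y)⁻¹ • ∑ j, ((lamD u y)⁻¹ i j) • grad (fun z => u.Y z j) y) x = 0

/-- |∇λ λ⁻¹|² (entrywise, gradients contracted with the flat metric). -/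
def gradLamLamInvSq (u : Data) (x : E3) : ℝ :=
  ∑ i, ∑ j, ‖∑ k, ((lamD u x)⁻¹ k j) • grad (fun y => lamD u y i k) x‖ ^ 2

/-- The bounds defining the extreme class (Definition 1, items 1–4); all pointwise
    bounds are imposed on the region ρ ≤ r². -/
def ExtremeBounds (ρ₀ : ℝ) (u : Data) : Prop :=
  ∃ C C₁ C₂ C₃ C₄ C' : ℝ, 0 < C ∧ 0 < C₁ ∧ 0 < C₂ ∧ 0 < C₃ ∧ 0 < C₄ ∧ 0 < C' ∧
    (∀ x : E3, 0 < cylRho x → cylRho x ≤ ‖x‖ ^ 2 →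
      quadG (lamD u x)⁻¹ u.Y u.Y x / XD u x ≤ C / ‖x‖ ^ 4 ∧
      Real.exp (-(2 : ℝ) * u.v x) * quadG (lamD u x)⁻¹ u.Y u.Y x / XD u x ≤ C / ‖x‖ ^ 2 ∧
      cylRho x ^ 2 ≤ XD u x ∧
      ‖grad u.v x‖ ^ 2 ≤ C / ‖x‖ ^ 4 ∧
      ‖grad (fun y => Real.log (XD u y)) x‖ ^ 2 ≤ C / cylRho x ^ 2) ∧
    (∀ x ∈ Omg ρ₀, cylRho x ≤ ‖x‖ ^ 2 →
      (lamD u x - (C₁ * cylRho x) • (1 : Mat2)).PosSemidef ∧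
      ((C₂ * cylRho x) • (1 : Mat2) - lamD u x).PosSemidef ∧
      ((lamD u x)⁻¹ - (C₃ / cylRho x) • (1 : Mat2)).PosSemidef ∧
      ((C₄ / cylRho x) • (1 : Mat2) - (lamD u x)⁻¹).PosSemidef ∧
      XD u x ^ 2 ≤ C' * cylRho x ^ 4 ∧
      gradLamLamInvSq u x ≤ C / cylRho x ^ 2)

/-- The potential X_t⁻¹ Ȳᵗ λ_t⁻¹ Ȳ + 16 v̄² whose Laplacian carries the boundary
    term in the integrated Carter identity. -/
def carterPot (u φ : Data) (t : ℝ) (y : E3) : ℝ :=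
  vecQuad (lamD (addS u φ t) y)⁻¹ (φ.Y y) (φ.Y y) / XD (addS u φ t) y + 16 * (φ.v y) ^ 2

/-- Rendering of condition (ii) of the extreme class: the decay and boundary
    conditions make all boundary terms arising in integration by parts against
    perturbations in B vanish (the total divergences integrate to zero). -/
def NoBoundaryTerms (β ρ₀ : ℝ) (u : Data) : Prop :=
  ∀ φ : Data, InB β ρ₀ u.L φ → ∀ t ∈ Set.Ico (0 : ℝ) 1,
    (∫ x : E3, lap (carterPot u φ t) x) = 0

/-- The extreme class E (Definition 1): smooth axisymmetric data with symmetric,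
    positive-definite λ'₀, det λ'₀ = ρ², satisfying the stationary field
    equations, the boundary conditions, and the extreme bounds. -/
def IsExtremeData (β ρ₀ : ℝ) (u : Data) : Prop :=
  SmoothData u ∧ AxisymData u ∧
  (∀ x, (u.L x).IsSymm) ∧
  (∀ x, (u.L x).det = cylRho x ^ 2) ∧
  (∀ x, 0 < cylRho x → (u.L x).PosDef) ∧
  (∀ x, 0 < cylRho x → EL1 u x ∧ EL2 u x ∧ EL3 u x) ∧
  NoBoundaryTerms β ρ₀ u ∧
  ExtremeBounds ρ₀ u

/-- Integrand of the second variation E''_φ(t). -/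
def svIntegrand (u φ : Data) (t : ℝ) (x : E3) : ℝ :=
  let w := addS u φ t
  12 * ‖grad φ.v x‖ ^ 2 - gradDet φ.L x / cylRho x ^ 2
  + Real.exp (-(6 : ℝ) * w.v x) / cylRho x ^ 4 *
      (2 * quadG (φ.L x).adjugate w.Y φ.Y x
        + quadG (w.L x).adjugate φ.Y φ.Y x
        - 6 * φ.v x * quadG (φ.L x).adjugate w.Y w.Y x
        - 12 * φ.v x * quadG (w.L x).adjugate w.Y φ.Y x
        + 18 * (φ.v x) ^ 2 * quadG (w.L x).adjugate w.Y w.Y x)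

/-- The second variation E''_φ(t). -/
def secondVar (u φ : Data) (t : ℝ) : ℝ := (1 / 8) * ∫ x : E3, svIntegrand u φ t x

/-- λ̄ = 2 v̄ λ + λ λ'⁻¹ λ̄'. -/
def lamBar (w φ : Data) (x : E3) : Mat2 :=
  (2 * φ.v x) • lamD w x + lamD w x * (w.L x)⁻¹ * φ.L x

/-- U₁ = X⁻¹ λ⁻¹ Ȳ. -/
def U1f (w φ : Data) (y : E3) : Fin 2 → ℝ := fun i =>
  (XD w y)⁻¹ * ∑ j, (lamD w y)⁻¹ i j * φ.Y y j

/-- U₂ = X⁻¹ λ⁻¹ ∇Y. -/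
def U2f (w : Data) (x : E3) (i : Fin 2) : E3 :=
  (XD w x)⁻¹ • ∑ j, ((lamD w x)⁻¹ i j) • grad (fun y => w.Y y j) x

/-- δU₂ = X⁻¹ λ⁻¹ ∇Ȳ − X⁻¹ λ⁻¹ λ̄ λ⁻¹ ∇Y − 4 v̄ U₂. -/
def dU2 (w φ : Data) (x : E3) (i : Fin 2) : E3 :=
  (XD w x)⁻¹ • ∑ j, ((lamD w x)⁻¹ i j) • grad (fun y => φ.Y y j) x
  - (XD w x)⁻¹ •
      ∑ j, (((lamD w x)⁻¹ * lamBar w φ x * (lamD w x)⁻¹) i j) • grad (fun y => w.Y y j) x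
  - (4 * φ.v x) • U2f w x i

/-- The matrix field ∇(λ̄ λ⁻¹) + X⁻¹ ∇Y Ȳᵗ λ⁻¹ (entries are vectors). -/
def MmatF (w φ : Data) (x : E3) (i j : Fin 2) : E3 :=
  grad (fun y => (lamBar w φ y * (lamD w y)⁻¹) i j) x
  + ((XD w x)⁻¹ * ∑ k, φ.Y x k * (lamD w x)⁻¹ k j) • grad (fun y => w.Y y i) x

/-- The manifestly nonnegative right-hand side F of the five-dimensional
    Carter identity. -/
def Fquant (w φ : Data) (x : E3) : ℝ :=
  ‖(4 : ℝ) • grad φ.v x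
      + (XD w x)⁻¹ • ∑ i, ∑ j, (φ.Y x i * (lamD w x)⁻¹ i j) • grad (fun y => w.Y y j) x‖ ^ 2
  + XD w x * ((∑ i, ∑ j, lamD w x i j * ⟪dU2 w φ x i, dU2 w φ x j⟫)
      + ∑ i, ∑ j, lamD w x i j *
          ⟪grad (fun y => U1f w φ y i) x, grad (fun y => U1f w φ y j) x⟫)
  + ∑ i, ∑ j, ⟪MmatF w φ x i j, MmatF w φ x j i⟫

/-- G_X = 4Δ₃v + X⁻¹ ∇Yᵗ λ⁻¹ ∇Y. -/
def GX (w : Data) (x : E3) : ℝ := 4 * lap w.v x + quadG (lamD w x)⁻¹ w.Y w.Y x / XD w x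

/-- G_λ = ∇·(λ⁻¹∇λ) + X⁻¹ λ⁻¹ ∇Y·∇Yᵗ. -/
def Glam (w : Data) (x : E3) : Mat2 := Matrix.of fun i j =>
  divg (fun y => ∑ k, ((lamD w y)⁻¹ i k) • grad (fun z => lamD w z k j) y) x
  + (XD w x)⁻¹ * ∑ k, (lamD w x)⁻¹ i k *
      ⟪grad (fun y => w.Y y k) x, grad (fun y => w.Y y j) x⟫

/-- G_Y = ∇·(X⁻¹ λ⁻¹ ∇Y). -/
def GYv (w : Data) (x : E3) : Fin 2 → ℝ := fun i =>
  divg (fun y => (XD w y)⁻¹ • ∑ j, ((lamD w y)⁻¹ i j) • grad (fun z => w.Y z j) y) x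

/-- Linearized operator Ġ_X at data w in direction φ. -/
def GXdot (w φ : Data) (x : E3) : ℝ :=
  4 * lap φ.v x + Real.exp (-(6 : ℝ) * w.v x) / cylRho x ^ 4 *
    (2 * quadG (w.L x).adjugate φ.Y w.Y x
      + quadG (φ.L x).adjugate w.Y w.Y x
      - 6 * φ.v x * quadG (w.L x).adjugate w.Y w.Y x)

/-- δ(λ'⁻¹ ∇λ') = λ'⁻¹ ∇λ̄' − λ'⁻¹ λ̄' λ'⁻¹ ∇λ' (first variation of λ'⁻¹∇λ'). -/
def deltaLinvGradL (w φ : Data) (y : E3) (i j : Fin 2) : E3 :=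
  ∑ k, ((w.L y)⁻¹ i k) • grad (fun z => φ.L z k j) y
  - ∑ k, (((w.L y)⁻¹ * φ.L y * (w.L y)⁻¹) i k) • grad (fun z => w.L z k j) y

/-- Linearized operator Ġ_λ at data w in direction φ. -/
def Gldot (w φ : Data) (x : E3) : Mat2 := Matrix.of fun i j =>
  2 * lap φ.v x * ((1 : Mat2) i j)
  + divg (fun y => deltaLinvGradL w φ y i j) x
  + Real.exp (-(6 : ℝ) * w.v x) / cylRho x ^ 4 *
      (2 * ∑ k, (w.L x).adjugate i k *
          ⟪grad (fun y => w.Y y k) x, grad (fun y => φ.Y y j) x⟫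
        + ∑ k, (φ.L x).adjugate i k *
            ⟪grad (fun y => w.Y y k) x, grad (fun y => w.Y y j) x⟫
        - 6 * φ.v x * ∑ k, (w.L x).adjugate i k *
            ⟪grad (fun y => w.Y y k) x, grad (fun y => w.Y y j) x⟫)

/-- Linearized operator Ġ_Y at data w in direction φ. -/
def GYdot (w φ : Data) (x : E3) : Fin 2 → ℝ := fun i =>
  divg (fun y => (Real.exp (-(6 : ℝ) * w.v y) / cylRho y ^ 4) •
      (∑ j, ((w.L y).adjugate i j) • grad (fun z => φ.Y z j) y
        + ∑ j, ((φ.L y).adjugate i j) • grad (fun z => w.Y z j) y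
        - (6 * φ.v y) • ∑ j, ((w.L y).adjugate i j) • grad (fun z => w.Y z j) y)) x


-- basic helpers
def qf (x : E3) : ℝ := x 0 ^ 2 + x 1 ^ 2
def xpv (x : E3) : E3 := EuclideanSpace.single 0 (x 0) + EuclideanSpace.single 1 (x 1)

lemma qf_nonneg (x : E3) : 0 ≤ qf x := by unfold qf; positivity

lemma cylRho_eq (x : E3) : cylRho x = Real.sqrt (qf x) := rfl

lemma contDiff_coord (i : Fin 3) : ContDiff ℝ (⊤ : ℕ∞) (fun x : E3 => x i) := by
  simpa using (EuclideanSpace.proj (𝕜 := ℝ) (i : Fin 3)).contDiff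

lemma contDiff_qf : ContDiff ℝ (⊤ : ℕ∞) qf :=
  ((contDiff_coord 0).pow 2).add ((contDiff_coord 1).pow 2)

lemma continuous_cylRho : Continuous cylRho :=
  Real.continuous_sqrt.comp contDiff_qf.continuous

lemma cylRho_sq (x : E3) : cylRho x ^ 2 = qf x := Real.sq_sqrt (qf_nonneg x)

lemma cylRho_nonneg (x : E3) : 0 ≤ cylRho x := Real.sqrt_nonneg _

lemma cylRho_pos_iff (x : E3) : 0 < cylRho x ↔ 0 < qf x := Real.sqrt_pos

lemma cyl_rpow (x : E3) (s : ℝ) : cylRho x ^ s = qf x ^ (s / 2) := by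
  rw [cylRho_eq, Real.sqrt_eq_rpow, ← Real.rpow_mul (qf_nonneg x)]
  ring_nf

lemma xpv_apply0 (x : E3) : xpv x 0 = x 0 := by
  simp [xpv, EuclideanSpace.single_apply]
lemma xpv_apply1 (x : E3) : xpv x 1 = x 1 := by
  simp [xpv, EuclideanSpace.single_apply]
lemma xpv_apply2 (x : E3) : xpv x 2 = 0 := by
  simp [xpv, EuclideanSpace.single_apply]

lemma norm_xpv (x : E3) : ‖xpv x‖ = cylRho x := by
  rw [EuclideanSpace.norm_eq, cylRho_eq]
  congr 1
  simp [Fin.sum_univ_three, xpv_apply0, xpv_apply1, xpv_apply2, Real.norm_eq_abs, sq_abs, qf]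

lemma norm_grad (f : E3 → ℝ) (x : E3) : ‖grad f x‖ = ‖fderiv ℝ f x‖ := by
  rw [grad, gradient]
  exact LinearIsometryEquiv.norm_map _ _

lemma inner_grad (f : E3 → ℝ) (x v : E3) : ⟪grad f x, v⟫ = fderiv ℝ f x v := by
  rw [grad, gradient]
  exact InnerProductSpace.toDual_symm_apply


lemma mem_closure_cyl {ρ₀ : ℝ} (hρ₀ : 0 < ρ₀) {x : E3} (hx : cylRho x ≤ ρ₀) :
    x ∈ closure {y : E3 | cylRho y < ρ₀} := by
  rcases lt_or_eq_of_le hx with h | h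
  · exact subset_closure h
  · rw [Metric.mem_closure_iff]
    intro ε hε
    have hρpos : 0 < cylRho x := h ▸ hρ₀
    set s : ℝ := min 1 (ε / (cylRho x + 1)) with hs
    have hs0 : 0 < s := by
      apply lt_min one_pos
      positivity
    have hs1 : s ≤ 1 := min_le_left _ _
    refine ⟨x - s • xpv x, ?_, ?_⟩
    · show cylRho (x - s • xpv x) < ρ₀
      have hc : cylRho (x - s • xpv x) = (1 - s) * cylRho x := by
        have h0 : (x - s • xpv x) 0 = (1 - s) * x 0 := by
          simp [xpv_apply0]; ring
        have h1 : (x - s • xpv x) 1 = (1 - s) * x 1 := by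
          simp [xpv_apply1]; ring
        rw [cylRho_eq, cylRho_eq, qf, h0, h1]
        have : ((1-s) * x 0) ^ 2 + ((1-s) * x 1) ^ 2 = (1-s)^2 * qf x := by rw [qf]; ring
        rw [this, Real.sqrt_mul (sq_nonneg _), Real.sqrt_sq (by linarith)]
      rw [hc, ← h]
      nlinarith
    · rw [dist_eq_norm, sub_sub_cancel, norm_smul, Real.norm_eq_abs, abs_of_pos hs0, norm_xpv]
      have hsle : s ≤ ε / (cylRho x + 1) := min_le_right _ _
      have : s * cylRho x ≤ ε / (cylRho x + 1) * cylRho x := by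
        apply mul_le_mul_of_nonneg_right hsle (cylRho_nonneg x)
      have h2 : ε / (cylRho x + 1) * cylRho x < ε := by
        rw [div_mul_eq_mul_div, div_lt_iff₀ (by linarith)]
        nlinarith
      linarith

lemma fderiv_eq_zero_of_le {ρ₀ : ℝ} (hρ₀ : 0 < ρ₀) {f : E3 → ℝ} (hf : ContDiff ℝ 1 f)
    (h0 : ∀ x, cylRho x ≤ ρ₀ → f x = 0) : ∀ x, cylRho x ≤ ρ₀ → fderiv ℝ f x = 0 := by
  have hU : IsOpen {y : E3 | cylRho y < ρ₀} := isOpen_lt continuous_cylRho continuous_const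
  have hint : ∀ y ∈ {y : E3 | cylRho y < ρ₀}, fderiv ℝ f y = 0 := by
    intro y hy
    have hev : f =ᶠ[nhds y] fun _ => (0:ℝ) := by
      filter_upwards [hU.mem_nhds hy] with z hz using h0 z hz.le
    rw [hev.fderiv_eq]
    exact fderiv_const_apply 0
  intro x hx
  have hC : IsClosed {y : E3 | fderiv ℝ f y = 0} :=
    isClosed_eq (hf.continuous_fderiv one_ne_zero) continuous_const
  exact closure_minimal hint hC (mem_closure_cyl hρ₀ hx)

lemma integral_fderiv_apply_zero {F : E3 → ℝ} (hF : ContDiff ℝ 1 F)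
    (hFs : HasCompactSupport F) (v : E3) : (∫ x : E3, fderiv ℝ F x v) = 0 := by
  obtain ⟨R, hR⟩ : ∃ R : ℝ, tsupport F ⊆ Metric.closedBall 0 R :=
    (hFs.isBounded).subset_closedBall 0
  set b : ContDiffBump (0 : E3) := ⟨max R 0 + 1, max R 0 + 2, by positivity, by linarith⟩
  have hsub : tsupport F ⊆ Metric.ball (0:E3) b.rIn := by
    refine hR.trans ?_
    intro y hy
    simp only [Metric.mem_closedBall] at hy
    simp only [Metric.mem_ball]
    have hRle : R ≤ max R 0 := le_max_left _ _
    calc dist y 0 ≤ R := hy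
      _ < max R 0 + 1 := by linarith
  have hb1 : ∀ x ∈ tsupport F, (b : E3 → ℝ) x = 1 := fun x hx =>
    b.one_of_mem_closedBall (Metric.ball_subset_closedBall (hsub hx))
  have hbd : ∀ x ∈ tsupport F, fderiv ℝ (b : E3 → ℝ) x = 0 := by
    intro x hx
    have hev : (b : E3 → ℝ) =ᶠ[nhds x] fun _ => (1:ℝ) := b.eventuallyEq_one_of_mem_ball (hsub hx)
    rw [hev.fderiv_eq]; exact fderiv_const_apply 1
  have hFc := hF.continuous
  have hFd : Continuous fun x => fderiv ℝ F x v :=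
    (hF.continuous_fderiv one_ne_zero).clm_apply continuous_const
  have hbc : Continuous (b : E3 → ℝ) := (b.contDiff (n := 1)).continuous
  have hbdc : Continuous fun x => fderiv ℝ (b : E3 → ℝ) x v :=
    ((b.contDiff (n := 1)).continuous_fderiv one_ne_zero).clm_apply continuous_const
  have hsupp1 : HasCompactSupport fun x => (b : E3 → ℝ) x * fderiv ℝ F x v := by
    apply HasCompactSupport.intro hFs
    intro x hx
    have : fderiv ℝ F x = 0 := by
      by_contra hne
      exact hx (support_fderiv_subset (𝕜 := ℝ) hne)
    simp [this]
  have hsupp2 : HasCompactSupport fun x => fderiv ℝ (b : E3 → ℝ) x v * F x := by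
    apply HasCompactSupport.intro hFs
    intro x hx
    simp [image_eq_zero_of_notMem_tsupport hx]
  have hsupp3 : HasCompactSupport fun x => (b : E3 → ℝ) x * F x := by
    apply HasCompactSupport.intro hFs
    intro x hx
    simp [image_eq_zero_of_notMem_tsupport hx]
  have key := integral_mul_fderiv_eq_neg_fderiv_mul_of_integrable
    (μ := (volume : Measure E3)) (f := (b : E3 → ℝ)) (g := F) (v := v)
    ((hbdc.mul hFc).integrable_of_hasCompactSupport hsupp2)
    ((hbc.mul hFd).integrable_of_hasCompactSupport hsupp1)
    ((hbc.mul hFc).integrable_of_hasCompactSupport hsupp3)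
    (fun x _ => (b.contDiff (n := 1)).differentiable one_ne_zero x) (fun x _ => hF.differentiable one_ne_zero x)
  have hL : (∫ x : E3, (b : E3 → ℝ) x * fderiv ℝ F x v) = ∫ x : E3, fderiv ℝ F x v := by
    congr 1
    funext x
    by_cases hx : fderiv ℝ F x = 0
    · simp [hx]
    · rw [hb1 x (support_fderiv_subset (𝕜 := ℝ) hx), one_mul]
  have hRz : (∫ x : E3, fderiv ℝ (b : E3 → ℝ) x v * F x) = 0 := by
    have : ∀ x : E3, fderiv ℝ (b : E3 → ℝ) x v * F x = 0 := by
      intro x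
      by_cases hx : x ∈ tsupport F
      · simp [hbd x hx]
      · simp [image_eq_zero_of_notMem_tsupport hx]
    simp [this]
  rw [hL] at key
  rw [key, hRz, neg_zero]


lemma contAux {ρ₀ : ℝ} (hρ₀ : 0 < ρ₀) {h : E3 → ℝ} (hc : Continuous h)
    (h0 : ∀ x, cylRho x < ρ₀ → h x = 0) (a : ℝ) :
    Continuous fun x => h x * qf x ^ a := by
  rw [continuous_iff_continuousAt]
  intro x
  rcases lt_or_ge (cylRho x) ρ₀ with hx | hx
  · have hev : (fun y => h y * qf y ^ a) =ᶠ[nhds x] fun _ => (0:ℝ) := by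
      filter_upwards [(isOpen_lt continuous_cylRho continuous_const).mem_nhds hx] with z hz
      simp [h0 z hz]
    exact hev.continuousAt
  · have hq : qf x ≠ 0 :=
      ne_of_gt ((cylRho_pos_iff x).mp (lt_of_lt_of_le hρ₀ hx))
    exact hc.continuousAt.mul (contDiff_qf.continuous.continuousAt.rpow_const (Or.inl hq))

lemma hasFDerivAt_coord (i : Fin 3) (x : E3) :
    HasFDerivAt (fun y : E3 => y i) (EuclideanSpace.proj (𝕜 := ℝ) (i : Fin 3) : E3 →L[ℝ] ℝ) x := by
  simpa using (EuclideanSpace.proj (𝕜 := ℝ) (i : Fin 3)).hasFDerivAt (x := x)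

lemma hasFDerivAt_qf (x : E3) :
    HasFDerivAt qf ((2 * x 0) • (EuclideanSpace.proj (𝕜 := ℝ) (0 : Fin 3) : E3 →L[ℝ] ℝ)
      + (2 * x 1) • (EuclideanSpace.proj (𝕜 := ℝ) (1 : Fin 3) : E3 →L[ℝ] ℝ)) x := by
  have h0 : HasFDerivAt (fun y : E3 => y 0 ^ 2)
      ((2 * x 0) • (EuclideanSpace.proj (𝕜 := ℝ) (0 : Fin 3) : E3 →L[ℝ] ℝ)) x := by
    have h := (hasFDerivAt_coord 0 x).mul (hasFDerivAt_coord 0 x)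
    have h2 : HasFDerivAt (fun y : E3 => y 0 ^ 2)
        (x 0 • (EuclideanSpace.proj (𝕜 := ℝ) (0 : Fin 3) : E3 →L[ℝ] ℝ)
          + x 0 • (EuclideanSpace.proj (𝕜 := ℝ) (0 : Fin 3) : E3 →L[ℝ] ℝ)) x := by
      exact h.congr_of_eventuallyEq (Filter.Eventually.of_forall fun y => by simp [pow_two])
    convert h2 using 1
    module
  have h1 : HasFDerivAt (fun y : E3 => y 1 ^ 2)
      ((2 * x 1) • (EuclideanSpace.proj (𝕜 := ℝ) (1 : Fin 3) : E3 →L[ℝ] ℝ)) x := by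
    have h := (hasFDerivAt_coord 1 x).mul (hasFDerivAt_coord 1 x)
    have h2 : HasFDerivAt (fun y : E3 => y 1 ^ 2)
        (x 1 • (EuclideanSpace.proj (𝕜 := ℝ) (1 : Fin 3) : E3 →L[ℝ] ℝ)
          + x 1 • (EuclideanSpace.proj (𝕜 := ℝ) (1 : Fin 3) : E3 →L[ℝ] ℝ)) x := by
      exact h.congr_of_eventuallyEq (Filter.Eventually.of_forall fun y => by simp [pow_two])
    convert h2 using 1
    module
  exact h0.add h1

lemma apply_xpv (L : E3 →L[ℝ] ℝ) (x : E3) :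
    L (xpv x) = x 0 * L (EuclideanSpace.single 0 1) + x 1 * L (EuclideanSpace.single 1 1) := by
  have h0 : EuclideanSpace.single (0 : Fin 3) (x 0) = x 0 • EuclideanSpace.single (0 : Fin 3) (1:ℝ) := by
    ext j; by_cases h : j = 0 <;> simp [EuclideanSpace.single_apply, h]
  have h1 : EuclideanSpace.single (1 : Fin 3) (x 1) = x 1 • EuclideanSpace.single (1 : Fin 3) (1:ℝ) := by
    ext j; by_cases h : j = 1 <;> simp [EuclideanSpace.single_apply, h]
  rw [xpv, h0, h1, map_add, L.map_smul, L.map_smul, smul_eq_mul, smul_eq_mul]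



def proj0 : E3 →L[ℝ] ℝ := (EuclideanSpace.proj (𝕜 := ℝ) (0 : Fin 3) : E3 →L[ℝ] ℝ)
def proj1 : E3 →L[ℝ] ℝ := (EuclideanSpace.proj (𝕜 := ℝ) (1 : Fin 3) : E3 →L[ℝ] ℝ)

def Ndf (Y0 Y1 : E3 → ℝ) (x : E3) : E3 →L[ℝ] ℝ :=
  (2 * Y0 x) • fderiv ℝ Y0 x + (2 * Y1 x) • fderiv ℝ Y1 x

def Qdf (x : E3) : E3 →L[ℝ] ℝ := (2 * x 0) • proj0 + (2 * x 1) • proj1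

def Ddf (e : ℝ) (Y0 Y1 : E3 → ℝ) (x : E3) : E3 →L[ℝ] ℝ :=
  (qf x ^ e) • Ndf Y0 Y1 x
    + ((Y0 x * Y0 x + Y1 x * Y1 x) * (e * qf x ^ (e - 1))) • Qdf x

lemma Ddf_apply (e : ℝ) (Y0 Y1 : E3 → ℝ) (x v : E3) :
    Ddf e Y0 Y1 x v = qf x ^ e * (2 * Y0 x * fderiv ℝ Y0 x v + 2 * Y1 x * fderiv ℝ Y1 x v)
      + (Y0 x * Y0 x + Y1 x * Y1 x) * (e * qf x ^ (e - 1))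
          * (2 * x 0 * proj0 v + 2 * x 1 * proj1 v) := by
  simp only [Ddf, Ndf, Qdf, ContinuousLinearMap.add_apply, ContinuousLinearMap.smul_apply,
    smul_eq_mul]

lemma hasFDerivAt_qf' (x : E3) : HasFDerivAt qf (Qdf x) x := hasFDerivAt_qf x

lemma hasFDerivAt_S {ρ₀ : ℝ} (hρ₀ : 0 < ρ₀) (e : ℝ) {Y0 Y1 : E3 → ℝ}
    (hY0 : ContDiff ℝ 1 Y0) (hY1 : ContDiff ℝ 1 Y1)
    (hvan0 : ∀ x, cylRho x ≤ ρ₀ → Y0 x = 0) (hvan1 : ∀ x, cylRho x ≤ ρ₀ → Y1 x = 0)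
    (x : E3) :
    HasFDerivAt (fun y => (Y0 y * Y0 y + Y1 y * Y1 y) * qf y ^ e) (Ddf e Y0 Y1 x) x := by
  by_cases hq : qf x = 0
  · have hlt : cylRho x < ρ₀ := by rw [cylRho_eq, hq]; simpa using hρ₀
    have hev : (fun y => (Y0 y * Y0 y + Y1 y * Y1 y) * qf y ^ e) =ᶠ[nhds x]
        fun _ => (0:ℝ) := by
      filter_upwards [(isOpen_lt continuous_cylRho continuous_const).mem_nhds hlt] with z hz
      simp [hvan0 z hz.le, hvan1 z hz.le]
    have hD0 : Ddf e Y0 Y1 x = 0 := by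
      have h00 : Y0 x = 0 := hvan0 x hlt.le
      have h11 : Y1 x = 0 := hvan1 x hlt.le
      simp [Ddf, Ndf, h00, h11]
    rw [hD0]
    exact (hasFDerivAt_const (0:ℝ) x).congr_of_eventuallyEq hev
  · have hnYd : HasFDerivAt (fun y => Y0 y * Y0 y + Y1 y * Y1 y) (Ndf Y0 Y1 x) x := by
      have h := (((hY0.differentiable one_ne_zero) x).hasFDerivAt.mul
        ((hY0.differentiable one_ne_zero) x).hasFDerivAt).add
        (((hY1.differentiable one_ne_zero) x).hasFDerivAt.mul
        ((hY1.differentiable one_ne_zero) x).hasFDerivAt)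
      have heq : Y0 x • fderiv ℝ Y0 x + Y0 x • fderiv ℝ Y0 x
          + (Y1 x • fderiv ℝ Y1 x + Y1 x • fderiv ℝ Y1 x) = Ndf Y0 Y1 x := by
        rw [Ndf]; module
      rwa [heq] at h
    have hwd : HasFDerivAt (fun y => qf y ^ e) ((e * qf x ^ (e - 1)) • Qdf x) x :=
      (hasFDerivAt_qf' x).rpow_const (Or.inl hq)
    have h := hnYd.mul hwd
    have heq : (Y0 x * Y0 x + Y1 x * Y1 x) • (e * qf x ^ (e - 1)) • Qdf x
        + qf x ^ e • Ndf Y0 Y1 x = Ddf e Y0 Y1 x := by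
      rw [Ddf, smul_smul]; module
    rwa [heq] at h

lemma young_ineq (ε a b : ℝ) (hε : 0 < ε) :
    2 * a * b ≤ ε * (a * a) + ε⁻¹ * (b * b) := by
  have h := sq_nonneg (ε * a - b)
  have hinv : ε * ε⁻¹ = 1 := mul_inv_cancel₀ (ne_of_gt hε)
  nlinarith [mul_pos hε (inv_pos.mpr hε)]

lemma num_step (d IA IB : ℝ) (hd : 0 < |d|)
    (h : 3 * |d| * IA ≤ 3 * |d| / 2 * IA + (3 * |d| / 2)⁻¹ * IB) :
    9 * (d ^ 2 * IA) ≤ 4 * IB := by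
  have hd2 : |d| ^ 2 = d ^ 2 := sq_abs d
  have hne : |d| ≠ 0 := ne_of_gt hd
  have hinv : (3 * |d| / 2)⁻¹ = 2 / (3 * |d|) := by
    rw [inv_div]
  rw [hinv] at h
  have h6 := mul_le_mul_of_nonneg_left h (le_of_lt (by positivity : (0:ℝ) < 6 * |d|))
  have elhs : 6 * |d| * (3 * |d| * IA) = 18 * (d ^ 2 * IA) := by
    rw [← hd2]; ring
  have erhs : 6 * |d| * (3 * |d| / 2 * IA + 2 / (3 * |d|) * IB)
      = 9 * (d ^ 2 * IA) + 4 * IB := by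
    field_simp
    linear_combination (IA * 54) * hd2
  rw [elhs, erhs] at h6
  linarith

lemma num_final (d IA IB : ℝ) (hd : d ≠ 0) (h9 : 9 * (d ^ 2 * IA) ≤ 4 * IB)
    (hIA : 0 ≤ IA) (hIB : 0 ≤ IB) : 3 * IA ≤ 2 * d⁻¹ ^ 2 * IB := by
  have hd2 : (0:ℝ) < d ^ 2 := by positivity
  have hinv : d⁻¹ ^ 2 * d ^ 2 = 1 := by field_simp
  nlinarith [h9, hd2, hIB, hinv, mul_nonneg hd2.le hIA]


/-- Lemma 2(c): weighted Poincaré inequality with axial weights for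
ℝ²-valued fields vanishing on K_{ρ₀}:
2 δ⁻² ∫_{Ω_{ρ₀}} ∇Ȳᵗ∇Ȳ ρ^{−3δ} dΣ ≥ 3 ∫_{Ω_{ρ₀}} ȲᵗȲ ρ^{−3δ−2} dΣ. -/
theorem weighted_poincare_vector (δ ρ₀ : ℝ) (hδ : δ ≠ 0) (hρ₀ : 0 < ρ₀)
    (Y : E3 → Fin 2 → ℝ) (hY : ∀ i, ContDiff ℝ 1 fun x => Y x i)
    (hsupp : ∀ i, HasCompactSupport fun x => Y x i)
    (hvan : ∀ x, cylRho x ≤ ρ₀ → Y x = 0) :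
    3 * (∫ x in Omg ρ₀, (∑ i, (Y x i) ^ 2) * cylRho x ^ (-3 * δ - 2)) ≤
      2 * δ⁻¹ ^ 2 *
        ∫ x in Omg ρ₀, (∑ i, ‖grad (fun y => Y y i) x‖ ^ 2) * cylRho x ^ (-3 * δ) := by
  classical
  set e : ℝ := (-3 * δ - 2) / 2 with he
  set Y0 : E3 → ℝ := fun y => Y y 0 with hY0def
  set Y1 : E3 → ℝ := fun y => Y y 1 with hY1def
  have hY0 : ContDiff ℝ 1 Y0 := hY 0
  have hY1 : ContDiff ℝ 1 Y1 := hY 1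
  have hvan0 : ∀ x, cylRho x ≤ ρ₀ → Y0 x = 0 := fun x hx => congrFun (hvan x hx) 0
  have hvan1 : ∀ x, cylRho x ≤ ρ₀ → Y1 x = 0 := fun x hx => congrFun (hvan x hx) 1
  have hfd0 := fderiv_eq_zero_of_le hρ₀ hY0 hvan0
  have hfd1 := fderiv_eq_zero_of_le hρ₀ hY1 hvan1
  set w : E3 → ℝ := fun x => qf x ^ e with hwdef
  set nY : E3 → ℝ := fun x => Y0 x * Y0 x + Y1 x * Y1 x with hnYdef
  set S : E3 → ℝ := fun x => nY x * w x with hSdef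
  set T : E3 → ℝ := fun x =>
    (2 * Y0 x * fderiv ℝ Y0 x (xpv x) + 2 * Y1 x * fderiv ℝ Y1 x (xpv x)) * w x with hTdef
  set G : E3 → ℝ := fun x =>
    (‖fderiv ℝ Y0 x‖ ^ 2 + ‖fderiv ℝ Y1 x‖ ^ 2) * qf x ^ (e + 1) with hGdef
  -- compact support machinery
  set K : Set E3 := tsupport Y0 ∪ tsupport Y1 with hKdef
  have hK : IsCompact K := (hsupp 0).union (hsupp 1)
  have hKc : IsClosed K := (isClosed_tsupport Y0).union (isClosed_tsupport Y1)
  have hKoff : ∀ x ∉ K, Y0 x = 0 ∧ Y1 x = 0 ∧ fderiv ℝ Y0 x = 0 ∧ fderiv ℝ Y1 x = 0 := by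
    intro x hx
    rw [hKdef, Set.mem_union] at hx
    push_neg at hx
    refine ⟨image_eq_zero_of_notMem_tsupport hx.1, image_eq_zero_of_notMem_tsupport hx.2, ?_, ?_⟩
    · by_contra hne
      exact hx.1 (support_fderiv_subset (𝕜 := ℝ) hne)
    · by_contra hne
      exact hx.2 (support_fderiv_subset (𝕜 := ℝ) hne)
  -- continuity
  have hnYc : Continuous nY := ((hY0.continuous.mul hY0.continuous).add
    (hY1.continuous.mul hY1.continuous))
  have hf0c : Continuous (fderiv ℝ Y0) := hY0.continuous_fderiv one_ne_zero
  have hf1c : Continuous (fderiv ℝ Y1) := hY1.continuous_fderiv one_ne_zero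
  have hScont : Continuous S :=
    contAux hρ₀ hnYc (fun x hx => by simp [hnYdef, hvan0 x hx.le, hvan1 x hx.le]) e
  have hGcont : Continuous G :=
    contAux hρ₀ ((hf0c.norm.pow 2).add (hf1c.norm.pow 2))
      (fun x hx => by simp [hfd0 x hx.le, hfd1 x hx.le]) (e + 1)
  have hxpvA : ∀ (f : E3 → ℝ), Continuous (fderiv ℝ f) →
      Continuous fun x => fderiv ℝ f x (xpv x) := by
    intro f hf
    have : (fun x => fderiv ℝ f x (xpv x)) = fun x =>
        x 0 * fderiv ℝ f x (EuclideanSpace.single 0 1)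
          + x 1 * fderiv ℝ f x (EuclideanSpace.single 1 1) := by
      funext x; rw [apply_xpv]
    rw [this]
    exact (((contDiff_coord 0).continuous).mul (hf.clm_apply continuous_const)).add
      (((contDiff_coord 1).continuous).mul (hf.clm_apply continuous_const))
  have hTcont : Continuous T :=
    contAux hρ₀ (((continuous_const.mul hY0.continuous).mul (hxpvA Y0 hf0c)).add
      ((continuous_const.mul hY1.continuous).mul (hxpvA Y1 hf1c)))
      (fun x hx => by simp [hvan0 x hx.le, hvan1 x hx.le]) e
  -- integrability
  have hiS : Integrable S := hScont.integrable_of_hasCompactSupport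
    (HasCompactSupport.intro hK (fun x hx => by simp [hSdef, hnYdef, (hKoff x hx).1, (hKoff x hx).2.1]))
  have hiG : Integrable G := hGcont.integrable_of_hasCompactSupport
    (HasCompactSupport.intro hK (fun x hx => by simp [hGdef, (hKoff x hx).2.2.1, (hKoff x hx).2.2.2]))
  have hiT : Integrable T := hTcont.integrable_of_hasCompactSupport
    (HasCompactSupport.intro hK (fun x hx => by simp [hTdef, (hKoff x hx).1, (hKoff x hx).2.1]))
  -- derivative of S
  have hUopen : IsOpen {y : E3 | cylRho y < ρ₀} := isOpen_lt continuous_cylRho continuous_const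
  have hSder : ∀ x, HasFDerivAt S (Ddf e Y0 Y1 x) x := fun x =>
    hasFDerivAt_S hρ₀ e hY0 hY1 hvan0 hvan1 x
  -- the two vector field components
  set V0 : E3 → ℝ := fun x => S x * x 0 with hV0def
  set V1 : E3 → ℝ := fun x => S x * x 1 with hV1def
  have hV0der : ∀ x, HasFDerivAt V0 (S x • proj0 + x 0 • Ddf e Y0 Y1 x) x :=
    fun x => (hSder x).mul (hasFDerivAt_coord 0 x)
  have hV1der : ∀ x, HasFDerivAt V1 (S x • proj1 + x 1 • Ddf e Y0 Y1 x) x :=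
    fun x => (hSder x).mul (hasFDerivAt_coord 1 x)
  have hVcd : ∀ (i : Fin 3), ContDiff ℝ 1 fun x => S x * x i := by
    intro i
    rw [contDiff_iff_contDiffAt]
    intro x
    rcases lt_or_ge (cylRho x) ρ₀ with hx | hx
    · have hev : (fun y => S y * y i) =ᶠ[nhds x] fun _ => (0:ℝ) := by
        filter_upwards [hUopen.mem_nhds hx] with z hz
        simp [hSdef, hnYdef, hvan0 z hz.le, hvan1 z hz.le]
      exact (contDiffAt_const (c := (0:ℝ))).congr_of_eventuallyEq hev
    · have hq : qf x ≠ 0 := ne_of_gt ((cylRho_pos_iff x).mp (lt_of_lt_of_le hρ₀ hx))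
      have hnY1 : ContDiff ℝ 1 nY := (hY0.mul hY0).add (hY1.mul hY1)
      have hwat : ContDiffAt ℝ 1 w x :=
        (contDiff_qf.of_le (mod_cast le_top)).contDiffAt.rpow_const_of_ne hq
      exact ((hnY1.contDiffAt.mul hwat).mul ((contDiff_coord i).of_le (mod_cast le_top)).contDiffAt)
  have hVcs : ∀ (i : Fin 3), HasCompactSupport fun x => S x * x i := by
    intro i
    exact HasCompactSupport.intro hK (fun x hx => by
      simp [hSdef, hnYdef, (hKoff x hx).1, (hKoff x hx).2.1])
  -- divergence theorem
  have hI0 : (∫ x : E3, fderiv ℝ V0 x (EuclideanSpace.single 0 1)) = 0 :=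
    integral_fderiv_apply_zero (hVcd 0) (hVcs 0) _
  have hI1 : (∫ x : E3, fderiv ℝ V1 x (EuclideanSpace.single 1 1)) = 0 :=
    integral_fderiv_apply_zero (hVcd 1) (hVcs 1) _
  -- pointwise divergence identity
  have hproj00 : proj0 (EuclideanSpace.single 0 1) = 1 := by
    simp [proj0]
  have hproj01 : proj0 (EuclideanSpace.single 1 1) = 0 := by
    simp [proj0, EuclideanSpace.single_apply]
  have hproj10 : proj1 (EuclideanSpace.single 0 1) = 0 := by
    simp [proj1, EuclideanSpace.single_apply]
  have hproj11 : proj1 (EuclideanSpace.single 1 1) = 1 := by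
    simp [proj1]
  have key : ∀ x, fderiv ℝ V0 x (EuclideanSpace.single 0 1)
      + fderiv ℝ V1 x (EuclideanSpace.single 1 1) = T x + (-(3:ℝ) * δ) * S x := by
    intro x
    rw [(hV0der x).fderiv, (hV1der x).fderiv]
    rw [ContinuousLinearMap.add_apply, ContinuousLinearMap.add_apply,
      ContinuousLinearMap.smul_apply, ContinuousLinearMap.smul_apply,
      ContinuousLinearMap.smul_apply, ContinuousLinearMap.smul_apply]
    simp only [smul_eq_mul]
    rw [Ddf_apply, Ddf_apply, hproj00, hproj01, hproj10, hproj11]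
    rw [hTdef, hSdef, hnYdef]
    simp only []
    rw [apply_xpv (fderiv ℝ Y0 x) x, apply_xpv (fderiv ℝ Y1 x) x]
    by_cases hq : qf x = 0
    · have hlt : cylRho x < ρ₀ := by rw [cylRho_eq, hq]; simpa using hρ₀
      have h0 := hvan0 x hlt.le
      have h1 := hvan1 x hlt.le
      rw [hwdef]
      simp only [h0, h1]
      ring
    · have hrpow : qf x ^ (e - 1) * qf x = qf x ^ e := by
        rw [← Real.rpow_add_one hq]; ring_nf
      have hqf : x 0 * x 0 + x 1 * x 1 = qf x := by rw [qf]; ring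
      have hwq : w x = qf x ^ e := by rw [hwdef]
      have h2e : 2 * e + 2 = -3 * δ := by rw [he]; ring
      rw [hwq]
      linear_combination (2 * (Y0 x * Y0 x + Y1 x * Y1 x) * e * qf x ^ (e - 1)) * hqf
        + (2 * (Y0 x * Y0 x + Y1 x * Y1 x) * e) * hrpow
        + ((Y0 x * Y0 x + Y1 x * Y1 x) * qf x ^ e) * h2e
  -- integral identity : ∫ T = 3δ ∫ S
  have hiDsum : Integrable (fun x => fderiv ℝ V0 x (EuclideanSpace.single 0 1)) := by
    have hc : Continuous (fun x => fderiv ℝ V0 x (EuclideanSpace.single 0 1)) :=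
      (((hVcd 0).continuous_fderiv one_ne_zero).clm_apply continuous_const)
    refine hc.integrable_of_hasCompactSupport (HasCompactSupport.intro hK (fun x hx => ?_))
    have : fderiv ℝ V0 x = 0 := by
      by_contra hne
      have hmem := support_fderiv_subset (𝕜 := ℝ) hne
      have hsub : tsupport V0 ⊆ K := by
        apply closure_minimal _ hKc
        intro z hz
        by_contra hzK
        exact hz (by simp [hV0def, hSdef, hnYdef, (hKoff z hzK).1, (hKoff z hzK).2.1])
      exact hx (hsub hmem)
    simp [this]
  have hiDsum1 : Integrable (fun x => fderiv ℝ V1 x (EuclideanSpace.single 1 1)) := by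
    have hc : Continuous (fun x => fderiv ℝ V1 x (EuclideanSpace.single 1 1)) :=
      (((hVcd 1).continuous_fderiv one_ne_zero).clm_apply continuous_const)
    refine hc.integrable_of_hasCompactSupport (HasCompactSupport.intro hK (fun x hx => ?_))
    have : fderiv ℝ V1 x = 0 := by
      by_contra hne
      have hmem := support_fderiv_subset (𝕜 := ℝ) hne
      have hsub : tsupport V1 ⊆ K := by
        apply closure_minimal _ hKc
        intro z hz
        by_contra hzK
        exact hz (by simp [hV1def, hSdef, hnYdef, (hKoff z hzK).1, (hKoff z hzK).2.1])
      exact hx (hsub hmem)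
    simp [this]
  have hTS : (∫ x : E3, T x) = 3 * δ * ∫ x : E3, S x := by
    have hsum : (∫ x : E3, (fderiv ℝ V0 x (EuclideanSpace.single 0 1)
        + fderiv ℝ V1 x (EuclideanSpace.single 1 1))) = 0 := by
      rw [integral_add hiDsum hiDsum1, hI0, hI1, add_zero]
    have hfun : (fun x => fderiv ℝ V0 x (EuclideanSpace.single 0 1)
        + fderiv ℝ V1 x (EuclideanSpace.single 1 1)) = fun x => T x + (-(3:ℝ) * δ) * S x :=
      funext key
    rw [hfun] at hsum
    rw [integral_add hiT (hiS.const_mul _), integral_const_mul] at hsum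
    linarith
  -- pointwise bound
  set ε : ℝ := 3 * |δ| / 2 with hε
  have hδabs : 0 < |δ| := abs_pos.mpr hδ
  have hεpos : 0 < ε := by rw [hε]; positivity
  have hw0 : ∀ x, 0 ≤ w x := fun x => Real.rpow_nonneg (qf_nonneg x) e
  have hS0 : ∀ x, 0 ≤ S x := fun x => mul_nonneg
    (by simp only [hnYdef]; nlinarith [mul_self_nonneg (Y0 x), mul_self_nonneg (Y1 x)]) (hw0 x)
  have hG0 : ∀ x, 0 ≤ G x := fun x =>
    mul_nonneg (by positivity) (Real.rpow_nonneg (qf_nonneg x) _)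
  have hpt : ∀ x, |T x| ≤ ε * S x + ε⁻¹ * G x := by
    intro x
    rcases le_or_gt (cylRho x) ρ₀ with hx | hx
    · have h0 := hvan0 x hx
      have h1 := hvan1 x hx
      have hT0 : T x = 0 := by simp [hTdef, h0, h1]
      rw [hT0, abs_zero]
      exact add_nonneg (mul_nonneg hεpos.le (hS0 x)) (mul_nonneg (by positivity) (hG0 x))
    · have hqpos : 0 < qf x := (cylRho_pos_iff x).mp (lt_trans hρ₀ hx)
      have hA0 : |fderiv ℝ Y0 x (xpv x)| ≤ ‖fderiv ℝ Y0 x‖ * cylRho x := by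
        rw [← norm_xpv, ← Real.norm_eq_abs]
        exact (fderiv ℝ Y0 x).le_opNorm (xpv x)
      have hA1 : |fderiv ℝ Y1 x (xpv x)| ≤ ‖fderiv ℝ Y1 x‖ * cylRho x := by
        rw [← norm_xpv, ← Real.norm_eq_abs]
        exact (fderiv ℝ Y1 x).le_opNorm (xpv x)
      have hrw : qf x * w x = qf x ^ (e + 1) := by
        rw [hwdef, Real.rpow_add_one (ne_of_gt hqpos)]; ring
      have hrhosq : cylRho x ^ 2 = qf x := cylRho_sq x
      have hεinv : ε * ε⁻¹ = 1 := mul_inv_cancel₀ (ne_of_gt hεpos)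
      have hρ0 : 0 ≤ cylRho x := cylRho_nonneg x
      have key0 : 2 * |Y0 x| * |fderiv ℝ Y0 x (xpv x)| ≤
          ε * (Y0 x * Y0 x) + ε⁻¹ * (‖fderiv ℝ Y0 x‖ ^ 2 * qf x) := by
        have h2 : 2 * |Y0 x| * (‖fderiv ℝ Y0 x‖ * cylRho x) ≤
            ε * (|Y0 x| * |Y0 x|) + ε⁻¹ * ((‖fderiv ℝ Y0 x‖ * cylRho x) *
              (‖fderiv ℝ Y0 x‖ * cylRho x)) :=
          young_ineq ε (|Y0 x|) (‖fderiv ℝ Y0 x‖ * cylRho x) hεpos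
        calc 2 * |Y0 x| * |fderiv ℝ Y0 x (xpv x)| ≤
            2 * |Y0 x| * (‖fderiv ℝ Y0 x‖ * cylRho x) := by
              apply mul_le_mul_of_nonneg_left hA0 (by positivity)
          _ ≤ ε * (|Y0 x| * |Y0 x|) + ε⁻¹ * ((‖fderiv ℝ Y0 x‖ * cylRho x) *
              (‖fderiv ℝ Y0 x‖ * cylRho x)) := h2
          _ = ε * (Y0 x * Y0 x) + ε⁻¹ * (‖fderiv ℝ Y0 x‖ ^ 2 * qf x) := by
              rw [abs_mul_abs_self, ← hrhosq]; ring
      have key1 : 2 * |Y1 x| * |fderiv ℝ Y1 x (xpv x)| ≤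
          ε * (Y1 x * Y1 x) + ε⁻¹ * (‖fderiv ℝ Y1 x‖ ^ 2 * qf x) := by
        have h2 : 2 * |Y1 x| * (‖fderiv ℝ Y1 x‖ * cylRho x) ≤
            ε * (|Y1 x| * |Y1 x|) + ε⁻¹ * ((‖fderiv ℝ Y1 x‖ * cylRho x) *
              (‖fderiv ℝ Y1 x‖ * cylRho x)) :=
          young_ineq ε (|Y1 x|) (‖fderiv ℝ Y1 x‖ * cylRho x) hεpos
        calc 2 * |Y1 x| * |fderiv ℝ Y1 x (xpv x)| ≤
            2 * |Y1 x| * (‖fderiv ℝ Y1 x‖ * cylRho x) := by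
              apply mul_le_mul_of_nonneg_left hA1 (by positivity)
          _ ≤ _ := h2
          _ = ε * (Y1 x * Y1 x) + ε⁻¹ * (‖fderiv ℝ Y1 x‖ ^ 2 * qf x) := by
              rw [abs_mul_abs_self, ← hrhosq]; ring
      have habs : |T x| ≤ (2 * |Y0 x| * |fderiv ℝ Y0 x (xpv x)|
          + 2 * |Y1 x| * |fderiv ℝ Y1 x (xpv x)|) * w x := by
        rw [hTdef]
        rw [abs_mul, abs_of_nonneg (hw0 x)]
        apply mul_le_mul_of_nonneg_right _ (hw0 x)
        calc |2 * Y0 x * fderiv ℝ Y0 x (xpv x) + 2 * Y1 x * fderiv ℝ Y1 x (xpv x)| ≤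
            |2 * Y0 x * fderiv ℝ Y0 x (xpv x)| + |2 * Y1 x * fderiv ℝ Y1 x (xpv x)| :=
              abs_add_le _ _
          _ = 2 * |Y0 x| * |fderiv ℝ Y0 x (xpv x)|
              + 2 * |Y1 x| * |fderiv ℝ Y1 x (xpv x)| := by
              rw [abs_mul, abs_mul, abs_mul, abs_mul]
              simp [abs_of_nonneg]
      calc |T x| ≤ (2 * |Y0 x| * |fderiv ℝ Y0 x (xpv x)|
          + 2 * |Y1 x| * |fderiv ℝ Y1 x (xpv x)|) * w x := habs
        _ ≤ ((ε * (Y0 x * Y0 x) + ε⁻¹ * (‖fderiv ℝ Y0 x‖ ^ 2 * qf x))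
            + (ε * (Y1 x * Y1 x) + ε⁻¹ * (‖fderiv ℝ Y1 x‖ ^ 2 * qf x))) * w x := by
            apply mul_le_mul_of_nonneg_right (add_le_add key0 key1) (hw0 x)
        _ = ε * S x + ε⁻¹ * ((‖fderiv ℝ Y0 x‖ ^ 2 + ‖fderiv ℝ Y1 x‖ ^ 2) * (qf x * w x)) := by
            rw [hSdef, hnYdef]; ring
        _ = ε * S x + ε⁻¹ * G x := by rw [hrw, hGdef]
  -- integrate the bound
  have hIbound : |∫ x : E3, T x| ≤ ε * (∫ x : E3, S x) + ε⁻¹ * ∫ x : E3, G x := by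
    have h1 : |∫ x : E3, T x| ≤ ∫ x : E3, |T x| := by
      simpa [Real.norm_eq_abs] using norm_integral_le_integral_norm (μ := (volume : Measure E3)) T
    have h2 : (∫ x : E3, |T x|) ≤ ∫ x : E3, (ε * S x + ε⁻¹ * G x) :=
      integral_mono hiT.abs ((hiS.const_mul ε).add (hiG.const_mul ε⁻¹)) hpt
    have h3 : (∫ x : E3, (ε * S x + ε⁻¹ * G x))
        = ε * (∫ x : E3, S x) + ε⁻¹ * ∫ x : E3, G x := by
      rw [integral_add ((hiS.const_mul ε)) ((hiG.const_mul ε⁻¹)),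
        integral_const_mul, integral_const_mul]
    linarith
  set IA : ℝ := ∫ x : E3, S x with hIA
  set IB : ℝ := ∫ x : E3, G x with hIB
  have hIA0 : 0 ≤ IA := integral_nonneg hS0
  have hIB0 : 0 ≤ IB := integral_nonneg hG0
  -- main numeric inequality: 3 * IA ≤ 2 * δ⁻¹^2 * IB
  have habs3 : |(3:ℝ) * δ * IA| = 3 * |δ| * IA := by
    rw [abs_mul, abs_mul, abs_of_nonneg hIA0]
    norm_num
  have hmain : 3 * IA ≤ 2 * δ⁻¹ ^ 2 * IB := by
    rw [hTS, habs3] at hIbound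
    rw [hε] at hIbound
    exact num_final δ IA IB hδ (num_step δ IA IB hδabs hIbound) hIA0 hIB0
  -- convert set integrals
  have hmeas : MeasurableSet (Omg ρ₀) :=
    (isOpen_lt continuous_const continuous_cylRho).measurableSet
  have hLeq : (∫ x in Omg ρ₀, (∑ i, (Y x i) ^ 2) * cylRho x ^ (-3 * δ - 2)) = IA := by
    rw [hIA]
    have h1 : ∀ x : E3, (∑ i, (Y x i) ^ 2) * cylRho x ^ (-3 * δ - 2) = S x := by
      intro x
      rw [Fin.sum_univ_two, cyl_rpow, hSdef, hnYdef, ← he]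
      ring
    calc (∫ x in Omg ρ₀, (∑ i, (Y x i) ^ 2) * cylRho x ^ (-3 * δ - 2))
        = ∫ x in Omg ρ₀, S x := by
          apply setIntegral_congr_fun hmeas
          intro x _
          exact h1 x
      _ = ∫ x : E3, S x := by
          apply setIntegral_eq_integral_of_forall_compl_eq_zero
          intro x hx
          have hxle : cylRho x ≤ ρ₀ := le_of_not_gt hx
          simp [hSdef, hnYdef, hvan0 x hxle, hvan1 x hxle]
  have hReq : (∫ x in Omg ρ₀, (∑ i, ‖grad (fun y => Y y i) x‖ ^ 2) * cylRho x ^ (-3 * δ)) = IB := by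
    rw [hIB]
    have h1 : ∀ x : E3, (∑ i, ‖grad (fun y => Y y i) x‖ ^ 2) * cylRho x ^ (-3 * δ) = G x := by
      intro x
      rw [Fin.sum_univ_two, cyl_rpow, hGdef]
      rw [norm_grad, norm_grad]
      have : e + 1 = -3 * δ / 2 := by rw [he]; ring
      rw [this]
    calc (∫ x in Omg ρ₀, (∑ i, ‖grad (fun y => Y y i) x‖ ^ 2) * cylRho x ^ (-3 * δ))
        = ∫ x in Omg ρ₀, G x := by
          apply setIntegral_congr_fun hmeas
          intro x _
          exact h1 x
      _ = ∫ x : E3, G x := by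
          apply setIntegral_eq_integral_of_forall_compl_eq_zero
          intro x hx
          have hxle : cylRho x ≤ ρ₀ := le_of_not_gt hx
          simp [hGdef, hfd0 x hxle, hfd1 x hxle]
  rw [hLeq, hReq]
  exact hmain


end BHMass
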